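/- Define a(0) = 1, a(1) = 4, a(2) = 5, and a(n) = 6 for n ≥ 3, and b(0) = −1, b(1) = 4, and b(n) = (2n−1)² for n ≥ 2. Then the convergents p(n)/q(n) of the continued fraction with partial quotients (a(n), b(n)) converge to π/4 as n → ∞. -/

import Mathlib

/-!
Both `q` and `p` satisfy, from index `1` on, the recurrence
`x (m + 2) = 6 x (m + 1) + (2m + 1)² x m`, which is solved in closed form by
`Q m = 4m (2m - 1)!!` and `P m = (2m - 1)!! (4m Sₘ + (-1)ᵐ)`, where `Sₘ` is the `m`-th partial sum
of the Leibniz series `1 - 1/3 + 1/5 - ⋯`. Hence `p m / q m = Sₘ + (-1)ᵐ / (4m) → π / 4`.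
-/

open Filter Topology Finset

theorem eq_of_two_step_recurrence {α : Type*} {u v : ℕ → α} (f : ℕ → α → α → α)
    (h0 : u 0 = v 0) (h1 : u 1 = v 1)
    (hu : ∀ n, u (n + 2) = f n (u (n + 1)) (u n)) (hv : ∀ n, v (n + 2) = f n (v (n + 1)) (v n)) :
    u = v := by
  funext n
  induction n using Nat.twoStepInduction with
  | zero => exact h0
  | one => exact h1
  | more n ihn ihn1 => rw [hu, hv, ihn, ihn1]

namespace LeibnizContinuedFraction

noncomputable def oddProd (m : ℕ) : ℝ := ∏ k ∈ range m, (2 * (k : ℝ) + 1)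

noncomputable def leibnizSum (m : ℕ) : ℝ := ∑ i ∈ range m, (-1 : ℝ) ^ i / (2 * (i : ℝ) + 1)

noncomputable def denom (m : ℕ) : ℝ := 4 * m * oddProd m

noncomputable def numer (m : ℕ) : ℝ := oddProd m * (4 * m * leibnizSum m + (-1) ^ m)

lemma oddProd_pos (m : ℕ) : 0 < oddProd m :=
  prod_pos fun _ _ => by positivity

lemma oddProd_succ (m : ℕ) : oddProd (m + 1) = oddProd m * (2 * m + 1) :=
  prod_range_succ _ _

lemma leibnizSum_succ (m : ℕ) :
    leibnizSum (m + 1) = leibnizSum m + (-1) ^ m / (2 * m + 1) :=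
  sum_range_succ _ _

lemma denom_recurrence (m : ℕ) :
    denom (m + 2) = 6 * denom (m + 1) + (2 * m + 1) ^ 2 * denom m := by
  simp only [denom, oddProd_succ]
  push_cast
  ring

lemma numer_recurrence (m : ℕ) :
    numer (m + 2) = 6 * numer (m + 1) + (2 * m + 1) ^ 2 * numer m := by
  simp only [numer, oddProd_succ, leibnizSum_succ, pow_succ]
  push_cast
  field_simp
  ring

lemma numer_div_denom {m : ℕ} (hm : m ≠ 0) :
    numer m / denom m = leibnizSum m + (-1) ^ m / (4 * m) := by
  have := (oddProd_pos m).ne'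
  simp only [numer, denom]
  field_simp

lemma tendsto_numer_div_denom : Tendsto (fun m => numer m / denom m) atTop (𝓝 (Real.pi / 4)) := by
  have hsign : Tendsto (fun m : ℕ => (-1 : ℝ) ^ m / (4 * m)) atTop (𝓝 0) := by
    refine squeeze_zero_norm (fun m => ?_) (tendsto_const_div_atTop_nhds_zero_nat (1 / 4))
    rw [norm_div, norm_pow, norm_neg, norm_one, one_pow, Real.norm_of_nonneg (by positivity)]
    exact le_of_eq (by ring)
  have := Real.tendsto_sum_pi_div_four.add hsign
  rw [add_zero] at this
  refine this.congr' ?_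
  filter_upwards [eventually_ne_atTop 0] with m hm
  rw [numer_div_denom hm, leibnizSum]

lemma tail_recurrence {a b x : ℕ → ℝ} (ha : ∀ n : ℕ, 3 ≤ n → a n = 6)
    (hb : ∀ n : ℕ, 2 ≤ n → b n = (2 * (n : ℝ) - 1) ^ 2)
    (hx : ∀ n : ℕ, x (n + 2) = a (n + 2) * x (n + 1) + b (n + 1) * x n) (m : ℕ) :
    x (m + 1 + 2) = 6 * x (m + 1 + 1) + (2 * ((m + 1 : ℕ) : ℝ) + 1) ^ 2 * x (m + 1) := by
  rw [hx, ha _ (by omega), hb _ (by omega)]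
  push_cast
  ring_nf

end LeibnizContinuedFraction

open LeibnizContinuedFraction

theorem stmt_1 
    (a b p q : ℕ → ℝ)
    (ha0 : a 0 = 1)
    (ha1 : a 1 = 4) (ha2 : a 2 = 5)
    (ha : ∀ n : ℕ, 3 ≤ n → a n = 6)
    (hb0 : b 0 = -1)
    (hb1 : b 1 = 4)
    (hb : ∀ n : ℕ, 2 ≤ n → b n = (2 * (n : ℝ) - 1) ^ 2)
    (hp0 : p 0 = a 0) (hq0 : q 0 = 1)
    (hp1 : p 1 = a 0 * a 1 + b 0) (hq1 : q 1 = a 1)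
    (hp : ∀ n : ℕ, p (n + 2) = a (n + 2) * p (n + 1) + b (n + 1) * p n)
    (hq : ∀ n : ℕ, q (n + 2) = a (n + 2) * q (n + 1) + b (n + 1) * q n) :
    Tendsto (fun n => p n / q n) atTop (𝓝 (Real.pi / 4)) := by
  have hq_eq : (fun m => q (m + 1)) = fun m => denom (m + 1) :=
    eq_of_two_step_recurrence (fun m y z => 6 * y + (2 * ((m + 1 : ℕ) : ℝ) + 1) ^ 2 * z)
      (by simp [denom, oddProd, hq1, ha1])
      (by rw [hq, hq1, hq0, ha1, ha2, hb1]; norm_num [denom, oddProd, prod_range_succ])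
      (tail_recurrence ha hb hq) (fun m => denom_recurrence (m + 1))
  have hp_eq : (fun m => p (m + 1)) = fun m => numer (m + 1) :=
    eq_of_two_step_recurrence (fun m y z => 6 * y + (2 * ((m + 1 : ℕ) : ℝ) + 1) ^ 2 * z)
      (by simp [numer, oddProd, leibnizSum, hp1, ha0, ha1, hb0])
      (by rw [hp, hp1, hp0, ha0, ha1, ha2, hb0, hb1]
          norm_num [numer, oddProd, leibnizSum, prod_range_succ, sum_range_succ])
      (tail_recurrence ha hb hp) (fun m => numer_recurrence (m + 1))
  refine (tendsto_add_atTop_iff_nat 1).mp ?_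
  convert (tendsto_add_atTop_iff_nat 1).mpr tendsto_numer_div_denom using 2 with m
  rw [congrFun hp_eq m, congrFun hq_eq m]
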